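/- arXiv:2604.25631 — 2 statements merged into one kernel-verified Lean document; each statement's English description precedes it below -/
import Mathlib

section
/- Let 𝒳 be a type and let 𝒞₁, 𝒞₂ be families of subsets of 𝒳. Suppose d₁, d₂ ∈ ℕ are such that no finite subset of 𝒳 of cardinality d₁ + 1 is shattered by 𝒞₁ and no finite subset of cardinality d₂ + 1 is shattered by 𝒞₂. Then no finite subset of 𝒳 of cardinality d₁ + d₂ + 2 is shattered by 𝒞₁ ∪ 𝒞₂; equivalently, VCdim(𝒞₁ ∪ 𝒞₂) ≤ d₁ + d₂ + 1 whenever VCdim(𝒞₁) ≤ d₁ and VCdim(𝒞₂) ≤ d₂. -/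
/-- A family `C` of subsets of `X` shatters a finite set `A` if every subset `B ⊆ A`
is the trace `c ∩ A` of some `c ∈ C`. -/
def Shatters {X : Type*} (C : Set (Set X)) (A : Finset X) : Prop :=
  ∀ B : Finset X, B ⊆ A → ∃ c ∈ C, ∀ x ∈ A, x ∈ c ↔ x ∈ B

/-- **VC dimension of a union.** If no set of cardinality `d₁ + 1` is shattered by `𝒞₁`
and no set of cardinality `d₂ + 1` is shattered by `𝒞₂`, then no set of cardinality
`d₁ + d₂ + 2` is shattered by `𝒞₁ ∪ 𝒞₂`; i.e. `VCdim(𝒞₁ ∪ 𝒞₂) ≤ d₁ + d₂ + 1`. -/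
theorem vcDim_union
    {X : Type*} (C₁ C₂ : Set (Set X)) (d₁ d₂ : ℕ)
    (h₁ : ∀ A : Finset X, A.card = d₁ + 1 → ¬ Shatters C₁ A)
    (h₂ : ∀ A : Finset X, A.card = d₂ + 1 → ¬ Shatters C₂ A) :
    ∀ A : Finset X, A.card = d₁ + d₂ + 2 → ¬ Shatters (C₁ ∪ C₂) A := by
  classical
  intro A hA hsh
  -- pick A₁ ⊆ A of card d₁+1 and A₂ = A \ A₁ of card d₂+1
  obtain ⟨A₁, hA₁sub, hA₁card⟩ : ∃ A₁ ⊆ A, A₁.card = d₁ + 1 := by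
    apply Finset.exists_subset_card_eq
    omega
  set A₂ := A \ A₁ with hA₂def
  have hA₂card : A₂.card = d₂ + 1 := by
    rw [hA₂def, Finset.card_sdiff_of_subset hA₁sub]; omega
  have h₁' := h₁ A₁ hA₁card
  have h₂' := h₂ A₂ hA₂card
  simp only [Shatters, not_forall] at h₁' h₂'
  obtain ⟨B₁, hB₁, hbad₁⟩ := h₁'
  obtain ⟨B₂, hB₂, hbad₂⟩ := h₂'
  push_neg at hbad₁ hbad₂
  have hB₁A : B₁ ⊆ A := hB₁.trans hA₁sub
  have hB₂A : B₂ ⊆ A := hB₂.trans (Finset.sdiff_subset)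
  obtain ⟨c, hc, htrace⟩ := hsh (B₁ ∪ B₂) (Finset.union_subset hB₁A hB₂A)
  have hdisj : ∀ x ∈ A₁, x ∉ B₂ := fun x hx hxB₂ =>
    (Finset.mem_sdiff.mp (hB₂ hxB₂)).2 hx
  have hdisj' : ∀ x ∈ A₂, x ∉ B₁ := fun x hx hxB₁ =>
    (Finset.mem_sdiff.mp hx).2 (hB₁ hxB₁)
  rcases hc with hc | hc
  · obtain ⟨x, hx, hne⟩ := hbad₁ c hc
    have ht := htrace x (hA₁sub hx)
    simp only [Finset.mem_union] at ht
    have := hdisj x hx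
    tauto
  · obtain ⟨x, hx, hne⟩ := hbad₂ c hc
    have ht := htrace x (Finset.sdiff_subset hx)
    simp only [Finset.mem_union] at ht
    have := hdisj' x hx
    tauto
end

section
/- Let 𝒳 be a type and 𝓗 a family of functions h : 𝒳 → ℝ. Define the loss concept class 𝒞 := { {(x, y, t) ∈ 𝒳 × ℝ × ℝ : (h(x) − y)² > t} : h ∈ 𝓗 } of subsets of 𝒳 × ℝ × ℝ, and let d_H ∈ ℕ be such that the threshold class 𝒯 := { {(x, t) ∈ 𝒳 × ℝ : h(x) > t} : h ∈ 𝓗 } shatters no finite subset of 𝒳 × ℝ of cardinality d_H + 1. Then 𝒞 shatters no finite subset of 𝒳 × ℝ × ℝ of cardinality exceeding 4(2 d_H + 1) log₂ 6; equivalently, the pseudo-dimension of the squared-loss class {(x,y) ↦ (h(x)−y)² : h ∈ 𝓗} is at most 4(2 d_H + 1) log₂ 6. -/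
/-!
Write `s t` for `√t`, or `-1` when `t < 0`. Then `(h x - y)² > t` iff `h x > y + s t` or
`h x < y - s t`, so every trace of the loss class on a finite set `A` is the union of a trace of
the subgraph class of `H`, pulled back along `(x, y, t) ↦ (x, y + s t)`, and a trace of the strict
supergraph class, pulled back along `(x, y, t) ↦ (x, y - s t)`. The strict supergraphs are the
complements of the closed subgraphs, and a finite set shattered by closed subgraphs, lowered
slightly, is shattered by open ones; so both classes have VC dimension at most `d`. If the loss
class shattered `A` with `#A = m`, Sauer–Shelah would give
`2 ^ m ≤ (∑_{k ≤ d} C(m, k)) ^ 2 ≤ (e m / d) ^ (2 d)`, which fails once `m > 20 d`, and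
`4 (2 d + 1) log₂ 6 ≥ 20 d + 10`.
-/

section Shattering

open Finset

variable {X Y : Type*} {C C' : Set (Set X)} {A S : Finset X} {d : ℕ}

lemma Shatters.mono_right (h : Shatters C A) (hSA : S ⊆ A) : Shatters C S := fun B hB ↦
  (h B (hB.trans hSA)).imp fun _ ⟨hc, hcB⟩ ↦ ⟨hc, fun x hx ↦ hcB x (hSA hx)⟩

lemma Shatters.mono_left (h : Shatters C A) (hCC' : C ⊆ C') : Shatters C' A := fun B hB ↦
  (h B hB).imp fun _ ⟨hc, hcB⟩ ↦ ⟨hCC' hc, hcB⟩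

lemma Shatters.compl (h : Shatters C A) : Shatters (compl '' C) A := by
  classical
  intro B _
  obtain ⟨c, hc, hcB⟩ := h (A \ B) sdiff_subset
  refine ⟨cᶜ, Set.mem_image_of_mem _ hc, fun x hx ↦ ?_⟩
  simp [hcB x hx, hx]

lemma Shatters.of_preimage [DecidableEq Y] {C : Set (Set Y)} {g : X → Y}
    (h : Shatters (Set.preimage g '' C) A) : Shatters C (A.image g) ∧ #(A.image g) = #A := by
  classical
  refine ⟨fun B _ ↦ ?_, card_image_of_injOn fun p hp q hq hpq ↦ ?_⟩
  · obtain ⟨_, ⟨c, hc, rfl⟩, hcB⟩ := h ({p ∈ A | g p ∈ B}) (filter_subset _ _)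
    refine ⟨c, hc, ?_⟩
    simp only [mem_image, forall_exists_index, and_imp, forall_apply_eq_imp_iff₂]
    intro p hp
    simpa [hp] using hcB p hp
  · obtain ⟨_, ⟨c, -, rfl⟩, hc⟩ := h {p} (by simpa using hp)
    have hpc : g p ∈ c := (hc p hp).2 (mem_singleton_self p)
    exact (mem_singleton.1 ((hc q hq).1 (show g q ∈ c from hpq ▸ hpc))).symm

def HasVCDimLE (C : Set (Set X)) (d : ℕ) : Prop :=
  ∀ S : Finset X, Shatters C S → #S ≤ d

lemma hasVCDimLE_of_forall_card_eq_succ (h : ∀ S : Finset X, #S = d + 1 → ¬ Shatters C S) :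
    HasVCDimLE C d := by
  intro S hS
  by_contra! hlt
  obtain ⟨T, hTS, hT⟩ := exists_subset_card_eq (show d + 1 ≤ #S from hlt)
  exact h T hT (hS.mono_right hTS)

lemma HasVCDimLE.mono (h : HasVCDimLE C d) (hC'C : C' ⊆ C) : HasVCDimLE C' d :=
  fun S hS ↦ h S (hS.mono_left hC'C)

lemma HasVCDimLE.compl (h : HasVCDimLE C d) : HasVCDimLE (compl '' C) d := fun S hS ↦
  h S (by simpa only [Set.compl_compl_image] using hS.compl)

lemma HasVCDimLE.preimage {C : Set (Set Y)} (h : HasVCDimLE C d) (g : X → Y) :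
    HasVCDimLE (Set.preimage g '' C) d := by
  classical
  intro S hS
  obtain ⟨hshat, hcard⟩ := hS.of_preimage
  exact hcard ▸ h _ hshat

end Shattering

section Traces

open Finset

variable {X : Type*} {C C₁ C₂ : Set (Set X)} {A S B : Finset X} {d : ℕ}

open Classical in
noncomputable def traces (C : Set (Set X)) (A : Finset X) : Finset (Finset X) :=
  {B ∈ A.powerset | ∃ c ∈ C, ∀ x ∈ A, x ∈ c ↔ x ∈ B}

lemma mem_traces : B ∈ traces C A ↔ B ⊆ A ∧ ∃ c ∈ C, ∀ x ∈ A, x ∈ c ↔ x ∈ B := by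
  simp [traces]

lemma card_traces_of_shatters (h : Shatters C A) : #(traces C A) = 2 ^ #A := by
  rw [← card_powerset]
  congr 1
  ext B
  simp only [mem_traces, mem_powerset, and_iff_left_iff_imp]
  exact h B

lemma card_traces_le_mul (hC : ∀ c ∈ C, ∃ c₁ ∈ C₁, ∃ c₂ ∈ C₂, c = c₁ ∪ c₂) :
    #(traces C A) ≤ #(traces C₁ A) * #(traces C₂ A) := by
  classical
  rw [← card_product]
  refine card_le_card_of_surjOn (fun B ↦ B.1 ∪ B.2) fun B hB ↦ ?_
  obtain ⟨-, c, hc, hcB⟩ := mem_traces.1 (mem_coe.1 hB)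
  obtain ⟨c₁, hc₁, c₂, hc₂, rfl⟩ := hC c hc
  refine ⟨({x ∈ A | x ∈ c₁}, {x ∈ A | x ∈ c₂}), ?_, ?_⟩
  · simp only [coe_product, Set.mem_prod, mem_coe, mem_traces]
    exact ⟨⟨filter_subset _ _, c₁, hc₁, by simp +contextual⟩,
      ⟨filter_subset _ _, c₂, hc₂, by simp +contextual⟩⟩
  · ext x
    simp only [mem_union, mem_filter, ← and_or_left, ← Set.mem_union]
    have hxA : x ∈ B → x ∈ A := fun h ↦ (mem_traces.1 (mem_coe.1 hB)).1 h
    exact ⟨fun h ↦ (hcB x h.1).1 h.2, fun h ↦ ⟨hxA h, (hcB x (hxA h)).2 h⟩⟩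

lemma subset_and_shatters_of_shatters_traces [DecidableEq X] (h : (traces C A).Shatters S) :
    S ⊆ A ∧ Shatters C S := by
  have hSA : S ⊆ A := by
    obtain ⟨B, hB, hSB⟩ := h.exists_superset
    exact hSB.trans (mem_traces.1 hB).1
  refine ⟨hSA, fun T hT ↦ ?_⟩
  obtain ⟨B, hB, rfl⟩ := h hT
  obtain ⟨-, c, hc, hcB⟩ := mem_traces.1 hB
  refine ⟨c, hc, fun x hx ↦ ?_⟩
  simp [hcB x (hSA hx), hx]

/-- The **Sauer–Shelah lemma** for the traces of a family of sets. -/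
lemma HasVCDimLE.card_traces_le (h : HasVCDimLE C d) (A : Finset X) :
    #(traces C A) ≤ ∑ k ∈ Iic d, (#A).choose k := by
  classical
  refine (card_le_card_shatterer _).trans ?_
  simp_rw [← card_powersetCard]
  refine (card_le_card fun S hS ↦ mem_biUnion.2 ⟨#S, ?_⟩).trans card_biUnion_le
  obtain ⟨hSA, hSC⟩ := subset_and_shatters_of_shatters_traces (mem_shatterer.1 hS)
  exact ⟨mem_Iic.2 (h S hSC), mem_powersetCard.2 ⟨hSA, rfl⟩⟩

end Traces

section Thresholds

open Finset Filter Topology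

variable {𝒳 : Type*} {H : Set (𝒳 → ℝ)} {d : ℕ}

def subgraphs (H : Set (𝒳 → ℝ)) : Set (Set (𝒳 × ℝ)) :=
  {s | ∃ h ∈ H, s = {q : 𝒳 × ℝ | h q.1 > q.2}}

lemma exists_pos_forall_lt_sub {ι : Type*} (s : Finset ι) (a b : ι → ℝ) :
    ∃ ε > 0, ∀ i ∈ s, a i < b i → a i < b i - ε := by
  have h : ∀ᶠ ε in 𝓝[>] (0 : ℝ), ∀ i ∈ s, a i < b i → a i < b i - ε := by
    refine (eventually_all_finset s).2 fun i _ ↦ ?_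
    by_cases hi : a i < b i
    · have hlim : Tendsto (fun ε ↦ b i - ε) (𝓝[>] 0) (𝓝 (b i)) :=
        ((continuous_sub_left (b i)).tendsto' 0 (b i) (sub_zero _)).mono_left nhdsWithin_le_nhds
      filter_upwards [hlim.eventually_const_lt hi] with ε hε using fun _ ↦ hε
    · exact Eventually.of_forall fun _ h ↦ absurd h hi
  exact (h.and self_mem_nhdsWithin).exists.imp fun ε hε ↦ ⟨hε.2, hε.1⟩

/-- The witnesses for the closed subgraphs still work for the open ones once every point is
lowered by less than the smallest positive gap `t - h x`. -/
lemma exists_shatters_subgraphs_map_sub {P : Finset (𝒳 × ℝ)}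
    (hP : Shatters {s | ∃ h ∈ H, s = {q : 𝒳 × ℝ | q.2 ≤ h q.1}} P) :
    ∃ ε > 0, Shatters (subgraphs H)
      (P.map ((Equiv.refl 𝒳).prodCongr (Equiv.subRight ε)).toEmbedding) := by
  classical
  have hw : ∀ B ⊆ P, ∃ h ∈ H, ∀ q ∈ P, q.2 ≤ h q.1 ↔ q ∈ B := fun B hB ↦ by
    obtain ⟨_, ⟨h, hh, rfl⟩, hc⟩ := hP B hB
    exact ⟨h, hh, hc⟩
  choose! w hwH hw using hw
  obtain ⟨ε, hε, hgap⟩ :=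
    exists_pos_forall_lt_sub (P.powerset ×ˢ P) (fun i ↦ w i.1 i.2.1) (fun i ↦ i.2.2)
  refine ⟨ε, hε, fun B' _ ↦ ?_⟩
  set B := {q ∈ P | (q.1, q.2 - ε) ∈ B'}
  refine ⟨_, ⟨w B, hwH B (filter_subset _ _), rfl⟩, ?_⟩
  simp only [forall_mem_map, Equiv.toEmbedding_apply, Equiv.prodCongr_apply, Equiv.coe_refl]
  intro q hq
  have hq' := hw B (filter_subset _ _) q hq
  have hgap' := hgap (B, q) (by simp [hq, B])
  simp only [mem_filter, hq, true_and, B] at hq' hgap'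
  change q.2 - ε < w B q.1 ↔ (q.1, q.2 - ε) ∈ B'
  rw [← hq']
  constructor
  · exact fun h ↦ not_lt.1 fun hlt ↦ (hgap' hlt).not_gt h
  · intro h
    linarith

lemma HasVCDimLE.closedSubgraphs (h : HasVCDimLE (subgraphs H) d) :
    HasVCDimLE {s | ∃ h ∈ H, s = {q : 𝒳 × ℝ | q.2 ≤ h q.1}} d := by
  intro P hP
  obtain ⟨ε, -, hshat⟩ := exists_shatters_subgraphs_map_sub hP
  exact card_map (s := P) _ ▸ h _ hshat

lemma HasVCDimLE.strictSupergraphs (h : HasVCDimLE (subgraphs H) d) :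
    HasVCDimLE {s | ∃ h ∈ H, s = {q : 𝒳 × ℝ | h q.1 < q.2}} d := by
  refine h.closedSubgraphs.compl.mono ?_
  rintro _ ⟨f, hf, rfl⟩
  exact ⟨_, ⟨f, hf, rfl⟩, by ext; simp⟩

end Thresholds

section SquaredLoss

open Finset

variable {𝒳 : Type*} {H : Set (𝒳 → ℝ)} {d : ℕ}

/-- Negative for `t < 0`, so that `t < a ^ 2 ↔ sqrtThreshold t < |a|` holds there too. -/
noncomputable def sqrtThreshold (t : ℝ) : ℝ := if 0 ≤ t then √t else -1

lemma lt_sq_iff_sqrtThreshold_lt_abs (a t : ℝ) : t < a ^ 2 ↔ sqrtThreshold t < |a| := by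
  unfold sqrtThreshold
  split_ifs with ht
  · rw [← Real.sqrt_sq_eq_abs, Real.sqrt_lt_sqrt_iff ht]
  · exact iff_of_true (by linarith [sq_nonneg a]) (by linarith [abs_nonneg a])

def squaredLossClass (H : Set (𝒳 → ℝ)) : Set (Set (𝒳 × ℝ × ℝ)) :=
  {s | ∃ h ∈ H, s = {q : 𝒳 × ℝ × ℝ | (h q.1 - q.2.1) ^ 2 > q.2.2}}

lemma setOf_sq_sub_gt_eq_union (h : 𝒳 → ℝ) :
    {q : 𝒳 × ℝ × ℝ | (h q.1 - q.2.1) ^ 2 > q.2.2} =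
      (fun q ↦ (q.1, q.2.1 + sqrtThreshold q.2.2)) ⁻¹' {p | h p.1 > p.2} ∪
        (fun q ↦ (q.1, q.2.1 - sqrtThreshold q.2.2)) ⁻¹' {p | h p.1 < p.2} := by
  ext q
  simp only [Set.mem_ofPred_eq, Set.mem_union, Set.mem_preimage, gt_iff_lt,
    lt_sq_iff_sqrtThreshold_lt_abs, lt_abs]
  constructor <;> rintro (h | h) <;> [left; right; left; right] <;> linarith

lemma HasVCDimLE.card_traces_squaredLossClass_le (h : HasVCDimLE (subgraphs H) d)
    (A : Finset (𝒳 × ℝ × ℝ)) :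
    #(traces (squaredLossClass H) A) ≤ (∑ k ∈ Iic d, (#A).choose k) ^ 2 := by
  rw [sq]
  refine (card_traces_le_mul ?_).trans <| Nat.mul_le_mul
    ((h.preimage fun q ↦ (q.1, q.2.1 + sqrtThreshold q.2.2)).card_traces_le A)
    ((h.strictSupergraphs.preimage fun q ↦ (q.1, q.2.1 - sqrtThreshold q.2.2)).card_traces_le A)
  rintro _ ⟨f, hf, rfl⟩
  exact ⟨_, ⟨_, ⟨f, hf, rfl⟩, rfl⟩, _, ⟨_, ⟨f, hf, rfl⟩, rfl⟩, setOf_sq_sub_gt_eq_union f⟩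

end SquaredLoss

section Estimates

open Finset Real

lemma sum_choose_mul_pow_le_one_add_pow {d m : ℕ} (hdm : d ≤ m) {x : ℝ} (hx₀ : 0 ≤ x)
    (hx₁ : x ≤ 1) : (∑ k ∈ Iic d, (m.choose k : ℝ)) * x ^ d ≤ (1 + x) ^ m := by
  calc (∑ k ∈ Iic d, (m.choose k : ℝ)) * x ^ d
      ≤ ∑ k ∈ Iic d, (m.choose k : ℝ) * x ^ k := by
        rw [sum_mul]
        exact sum_le_sum fun k hk ↦ mul_le_mul_of_nonneg_left
          (pow_le_pow_of_le_one hx₀ hx₁ (mem_Iic.1 hk)) (Nat.cast_nonneg _)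
    _ ≤ ∑ k ∈ range (m + 1), (m.choose k : ℝ) * x ^ k := by
        refine sum_le_sum_of_subset_of_nonneg (fun k hk ↦ ?_) fun k _ _ ↦ by positivity
        rw [mem_range]
        exact Nat.lt_succ_of_le ((mem_Iic.1 hk).trans hdm)
    _ = (1 + x) ^ m := by
        rw [add_comm 1 x, add_pow]
        simp [mul_comm]

lemma sum_choose_le_exp_one_mul_div_pow {d m : ℕ} (hd : 0 < d) (hdm : d ≤ m) :
    ∑ k ∈ Iic d, (m.choose k : ℝ) ≤ (exp 1 * m / d) ^ d := by
  have hd' : (0 : ℝ) < d := by exact_mod_cast hd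
  have hm : (0 : ℝ) < m := by exact_mod_cast hd.trans_le hdm
  have hx : (0 : ℝ) < d / m := by positivity
  have hxd : (exp 1 * m / d) ^ d * (d / m) ^ d = exp 1 ^ d := by
    rw [← mul_pow]
    congr 1
    field_simp
  rw [eq_div_of_mul_eq (by positivity) hxd, le_div_iff₀ (by positivity)]
  calc (∑ k ∈ Iic d, (m.choose k : ℝ)) * (d / m) ^ d ≤ (1 + d / m) ^ m :=
        sum_choose_mul_pow_le_one_add_pow hdm hx.le ((div_le_one hm).2 (by exact_mod_cast hdm))
    _ ≤ exp (d / m) ^ m := by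
        gcongr
        linarith [add_one_le_exp ((d : ℝ) / m)]
    _ = exp 1 ^ d := by
        rw [← exp_nat_mul, ← exp_nat_mul]
        field_simp

lemma two_mul_one_add_log_lt_mul_log_two {u : ℝ} (hu : 20 < u) :
    2 * (1 + log u) < u * log 2 := by
  have hlog16 : log u ≤ u / 16 - 1 + 4 * log 2 := by
    have h16 : log 16 = 4 * log 2 := by
      rw [show (16 : ℝ) = 2 ^ 4 by norm_num, log_pow, Nat.cast_ofNat]
    have := log_le_sub_one_of_pos (show 0 < u / 16 by positivity)
    rw [log_div (by positivity) (by norm_num), h16] at this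
    linarith
  have hlog2 : 1 / 2 < log 2 := by linarith [log_two_gt_d9]
  nlinarith [mul_pos (show 0 < u - 8 by linarith) (show 0 < log 2 - 1 / 2 by linarith)]

lemma sum_choose_sq_lt_two_pow {d m : ℕ} (h : 20 * d < m) :
    (∑ k ∈ Iic d, m.choose k) ^ 2 < 2 ^ m := by
  rcases Nat.eq_zero_or_pos d with rfl | hd
  · rw [show Iic 0 = {0} from rfl, sum_singleton, Nat.choose_zero_right, one_pow]
    exact Nat.one_lt_two_pow (by omega)
  have hd' : (0 : ℝ) < d := by exact_mod_cast hd
  set u : ℝ := m / d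
  have hu : 20 < u := by
    rw [lt_div_iff₀ hd']
    exact_mod_cast h
  have hmu : (m : ℝ) = d * u := (mul_div_cancel₀ _ hd'.ne').symm
  have hsum := sum_choose_le_exp_one_mul_div_pow hd (by omega : d ≤ m)
  rw [mul_div_assoc] at hsum
  suffices (∑ k ∈ Iic d, (m.choose k : ℝ)) ^ 2 < 2 ^ m by exact_mod_cast this
  calc (∑ k ∈ Iic d, (m.choose k : ℝ)) ^ 2 ≤ ((exp 1 * u) ^ d) ^ 2 := by gcongr
    _ = exp (d * (2 * (1 + log u))) := by
        have he : exp 1 * u = exp (1 + log u) := by rw [exp_add, exp_log (by positivity)]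
        rw [he, ← exp_nat_mul, sq, ← exp_add]
        ring_nf
    _ < exp (d * (u * log 2)) := exp_lt_exp.2 (mul_lt_mul_of_pos_left
        (two_mul_one_add_log_lt_mul_log_two hu) hd')
    _ = 2 ^ m := by
        rw [← mul_assoc, ← hmu, exp_nat_mul, exp_log two_pos]

lemma five_halves_le_logb_two_six : 5 / 2 ≤ logb 2 6 := by
  rw [logb, le_div_iff₀ (log_pos one_lt_two)]
  have h : log (2 ^ 5) ≤ log (6 ^ 2) := log_le_log (by norm_num) (by norm_num)
  rw [log_pow, log_pow] at h
  push_cast at h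
  linarith

end Estimates

/-- **Squared-loss lifting of the pseudo-dimension.** Let `𝓗` be a family of real-valued
functions on `𝒳` whose threshold class `{ {(x,t) : h(x) > t} : h ∈ 𝓗 }` shatters no
finite set of cardinality `d_H + 1`.  Then the thresholded squared-loss class
`{ {(x,y,t) : (h(x) − y)² > t} : h ∈ 𝓗 }` shatters no finite set of cardinality
exceeding `4(2 d_H + 1) log₂ 6`; i.e. the pseudo-dimension of the squared-loss class
is at most `4(2 d_H + 1) log₂ 6`. -/
theorem squared_loss_pseudodimension
    {𝒳 : Type*} (H : Set (𝒳 → ℝ)) (dH : ℕ)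
    (hH : ∀ A : Finset (𝒳 × ℝ), A.card = dH + 1 →
      ¬ Shatters {s : Set (𝒳 × ℝ) | ∃ h ∈ H, s = {q : 𝒳 × ℝ | h q.1 > q.2}} A) :
    ∀ A : Finset (𝒳 × ℝ × ℝ),
      (4 * (2 * (dH : ℝ) + 1) * Real.logb 2 6 < (A.card : ℝ)) →
      ¬ Shatters
          {s : Set (𝒳 × ℝ × ℝ) | ∃ h ∈ H, s = {q : 𝒳 × ℝ × ℝ | (h q.1 - q.2.1) ^ 2 > q.2.2}}
          A := by
  intro A hA hS
  have hcard : 20 * dH < A.card := by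
    have hlogb := five_halves_le_logb_two_six
    have hcard' : (20 * dH : ℝ) < A.card := by nlinarith
    exact_mod_cast hcard'
  have hcount := (hasVCDimLE_of_forall_card_eq_succ hH).card_traces_squaredLossClass_le A
  rw [card_traces_of_shatters (C := squaredLossClass H) hS] at hcount
  exact (sum_choose_sq_lt_two_pow hcard).not_ge hcount
end
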